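/- Let μ be a finite positive Borel measure on ℝ with Borel transform m, let 0 ≤ η < 1 and let E ∈ ℝ. If liminf_{ε→0⁺} ε^{1−η} · Im m(E+iε) > 0, then γ_μ⁺(E) ≤ η·(2 − γ_μ⁻(E))/(2 − η). -/

import Mathlib

/-!
Write `Im m(E + iε) = ∫ ε / ((x - E)² + ε²) dμ`. If `μ(E - r, E + r) ≤ K r^γ` for all `r` with
`γ < 2`, splitting `ℝ` into the interval of radius `δ` and the dyadic annuli around `E` gives
`ε Im m(E + iε) ≤ μ(E - δ, E + δ) + C ε² δ^(γ - 2)`. Against the hypothesis `ε Im m ≥ c ε^η`, the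
choice `δ = ε^s` makes the tail negligible as soon as `η < 2 + s (γ - 2)`, so
`μ(E - r, E + r) ≥ (c/2) r^(η/s)` for small `r` and `γ⁺ ≤ η / s`. Letting `s ↑ (2 - η)/(2 - γ)`
and then `γ ↑ γ⁻` (any `γ < γ⁻` gives such a power bound) yields `γ⁺ ≤ η (2 - γ⁻)/(2 - η)`.
-/

open MeasureTheory Filter Set

/-- `γ_μ⁺(E) = limsup_{ε→0⁺} log μ((E−ε,E+ε)) / log ε`. -/
noncomputable def gammaPlus (μ : Measure ℝ) (E : ℝ) : ℝ :=
  Filter.limsup (fun ε : ℝ => Real.log (μ (Set.Ioo (E - ε) (E + ε))).toReal / Real.log ε)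
    (nhdsWithin 0 (Set.Ioi 0))

/-- `γ_μ⁻(E) = liminf_{ε→0⁺} log μ((E−ε,E+ε)) / log ε`. -/
noncomputable def gammaMinus (μ : Measure ℝ) (E : ℝ) : ℝ :=
  Filter.liminf (fun ε : ℝ => Real.log (μ (Set.Ioo (E - ε) (E + ε))).toReal / Real.log ε)
    (nhdsWithin 0 (Set.Ioi 0))

/-- The Borel transform `m(z) = ∫ (x - z)⁻¹ dμ(x)` of a measure `μ` on `ℝ`. -/
noncomputable def borelTransform (μ : Measure ℝ) (z : ℂ) : ℂ :=
  ∫ x : ℝ, ((x : ℂ) - z)⁻¹ ∂μ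

open Topology Complex

lemma inv_sub_add_mul_I_im (x E ε : ℝ) :
    (((x : ℂ) - (E + ε * I))⁻¹).im = ε / ((x - E) ^ 2 + ε ^ 2) := by
  rw [inv_im, normSq_apply]
  simp only [sub_re, sub_im, add_re, add_im, ofReal_re, ofReal_im, mul_re, mul_im, I_re, I_im]
  ring

lemma integrable_inv_sub_add_mul_I (μ : Measure ℝ) [IsFiniteMeasure μ] (E : ℝ) {ε : ℝ}
    (hε : 0 < ε) : Integrable (fun x : ℝ => ((x : ℂ) - (E + ε * I))⁻¹) μ := by
  have hle (x : ℝ) : ε ≤ ‖(x : ℂ) - (E + ε * I)‖ := by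
    simpa [abs_of_pos hε] using abs_im_le_norm ((x : ℂ) - (E + ε * I))
  refine Integrable.mono' (integrable_const ε⁻¹) ?_ (.of_forall fun x => ?_)
  · refine (Continuous.inv₀ (by fun_prop) fun x hx => ?_).aestronglyMeasurable
    simpa [hx] using hε.trans_le (hle x)
  · rw [norm_inv]
    exact inv_anti₀ hε (hle x)

lemma mul_borelTransform_im (μ : Measure ℝ) [IsFiniteMeasure μ] (E : ℝ) {ε : ℝ} (hε : 0 < ε) :
    ε * (borelTransform μ (E + ε * I)).im = ∫ x, ε ^ 2 / ((x - E) ^ 2 + ε ^ 2) ∂μ := by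
  have him : (borelTransform μ (E + ε * I)).im = ∫ x, ε / ((x - E) ^ 2 + ε ^ 2) ∂μ := by
    simp only [borelTransform, ← inv_sub_add_mul_I_im]
    exact (integral_im (integrable_inv_sub_add_mul_I μ E hε)).symm
  rw [him, ← integral_const_mul]
  congr 1 with x
  ring

lemma ofReal_poisson_le_indicator_add_tsum (E : ℝ) {ε δ : ℝ} (hδ : 0 < δ) (x : ℝ) :
    ENNReal.ofReal (ε ^ 2 / ((x - E) ^ 2 + ε ^ 2)) ≤
      (Ioo (E - δ) (E + δ)).indicator 1 x +
        ∑' k : ℕ, (Ioo (E - 2 ^ (k + 1) * δ) (E + 2 ^ (k + 1) * δ)).indicator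
          (fun _ => ENNReal.ofReal (ε ^ 2 / (2 ^ k * δ) ^ 2)) x := by
  rcases lt_or_ge |x - E| δ with hx | hx
  · have hmem : x ∈ Ioo (E - δ) (E + δ) := by
      rw [abs_sub_lt_iff] at hx; constructor <;> linarith
    refine le_add_right ?_
    rw [indicator_of_mem hmem, Pi.one_apply, ENNReal.ofReal_le_one]
    exact div_le_one_of_le₀ (by nlinarith [sq_nonneg (x - E)]) (by positivity)
  · obtain ⟨k, hk, hk'⟩ := exists_nat_pow_near ((one_le_div hδ).2 hx) one_lt_two
    rw [le_div_iff₀ hδ] at hk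
    rw [div_lt_iff₀ hδ] at hk'
    have hmem : x ∈ Ioo (E - 2 ^ (k + 1) * δ) (E + 2 ^ (k + 1) * δ) := by
      rw [abs_sub_lt_iff] at hk'; constructor <;> linarith
    refine le_add_left (le_trans ?_ (ENNReal.le_tsum k))
    rw [indicator_of_mem hmem]
    refine ENNReal.ofReal_le_ofReal (div_le_div_of_nonneg_left (sq_nonneg ε) (by positivity) ?_)
    calc (2 ^ k * δ) ^ 2 ≤ |x - E| ^ 2 := pow_le_pow_left₀ (by positivity) hk 2
      _ ≤ (x - E) ^ 2 + ε ^ 2 := by rw [sq_abs]; nlinarith [sq_nonneg ε]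

lemma lintegral_poisson_le (μ : Measure ℝ) (E : ℝ) {ε δ : ℝ} (hδ : 0 < δ) :
    ∫⁻ x, ENNReal.ofReal (ε ^ 2 / ((x - E) ^ 2 + ε ^ 2)) ∂μ ≤
      μ (Ioo (E - δ) (E + δ)) + ∑' k : ℕ, ENNReal.ofReal (ε ^ 2 / (2 ^ k * δ) ^ 2) *
        μ (Ioo (E - 2 ^ (k + 1) * δ) (E + 2 ^ (k + 1) * δ)) := by
  refine (lintegral_mono (ofReal_poisson_le_indicator_add_tsum E hδ)).trans_eq ?_
  rw [lintegral_add_left (measurable_one.indicator measurableSet_Ioo),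
    lintegral_tsum fun k => (measurable_const.indicator measurableSet_Ioo).aemeasurable]
  simp only [lintegral_indicator_const measurableSet_Ioo, Pi.one_def, one_mul]

lemma dyadic_term_eq (K γ : ℝ) {ε δ : ℝ} (hδ : 0 < δ) (k : ℕ) :
    ε ^ 2 / (2 ^ k * δ) ^ 2 * (K * (2 ^ (k + 1) * δ) ^ γ) =
      K * 2 ^ γ * (ε ^ 2 * δ ^ (γ - 2)) * ((2 : ℝ) ^ (γ - 2)) ^ k := by
  set u : ℝ := 2 ^ k * δ
  have hu : 0 < u := by positivity
  have hdouble : (2 : ℝ) ^ (k + 1) * δ = 2 * u := by ring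
  have hu_rpow : u ^ (γ - 2) = ((2 : ℝ) ^ (γ - 2)) ^ k * δ ^ (γ - 2) := by
    rw [Real.mul_rpow (by positivity) hδ.le, Real.rpow_pow_comm zero_le_two]
  calc ε ^ 2 / u ^ 2 * (K * (2 ^ (k + 1) * δ) ^ γ) = K * 2 ^ γ * ε ^ 2 * (u ^ γ / u ^ 2) := by
        rw [hdouble, Real.mul_rpow zero_le_two hu.le]; ring
    _ = K * 2 ^ γ * (ε ^ 2 * δ ^ (γ - 2)) * ((2 : ℝ) ^ (γ - 2)) ^ k := by
        rw [← Real.rpow_two u, ← Real.rpow_sub hu, hu_rpow]; ring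

lemma integral_poisson_le_of_measure_le_rpow (μ : Measure ℝ) [IsFiniteMeasure μ] (E : ℝ)
    {K γ ε δ : ℝ} (hγ : γ < 2)
    (hK : ∀ r, 0 < r → (μ (Ioo (E - r) (E + r))).toReal ≤ K * r ^ γ) (hδ : 0 < δ) :
    ∫ x, ε ^ 2 / ((x - E) ^ 2 + ε ^ 2) ∂μ ≤
      (μ (Ioo (E - δ) (E + δ))).toReal + K * 2 ^ γ / (1 - 2 ^ (γ - 2)) * (ε ^ 2 * δ ^ (γ - 2)) := by
  set q : ℝ := 2 ^ (γ - 2)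
  set A : ℝ := K * 2 ^ γ * (ε ^ 2 * δ ^ (γ - 2))
  have hq0 : 0 ≤ q := by positivity
  have hq1 : q < 1 := Real.rpow_lt_one_of_one_lt_of_neg one_lt_two (by linarith)
  have hK0 : 0 ≤ K := by simpa using ENNReal.toReal_nonneg.trans (hK 1 one_pos)
  have hA : 0 ≤ A := by positivity
  have hterm (k : ℕ) : ENNReal.ofReal (ε ^ 2 / (2 ^ k * δ) ^ 2) *
      μ (Ioo (E - 2 ^ (k + 1) * δ) (E + 2 ^ (k + 1) * δ)) ≤ ENNReal.ofReal (A * q ^ k) := by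
    rw [← dyadic_term_eq K γ hδ k, ENNReal.ofReal_mul (by positivity)]
    gcongr
    exact (ENNReal.le_ofReal_iff_toReal_le (measure_ne_top _ _) (by positivity)).2
      (hK _ (by positivity))
  have hsum : ∑' k : ℕ, ENNReal.ofReal (A * q ^ k) = ENNReal.ofReal (A / (1 - q)) := by
    rw [← ENNReal.ofReal_tsum_of_nonneg (fun k => by positivity)
      ((summable_geometric_of_lt_one hq0 hq1).mul_left A), tsum_mul_left,
      tsum_geometric_of_lt_one hq0 hq1, div_eq_mul_inv]
  have hlin : ∫⁻ x, ENNReal.ofReal (ε ^ 2 / ((x - E) ^ 2 + ε ^ 2)) ∂μ ≤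
      ENNReal.ofReal ((μ (Ioo (E - δ) (E + δ))).toReal + A / (1 - q)) := by
    rw [ENNReal.ofReal_add ENNReal.toReal_nonneg (div_nonneg hA (by linarith)),
      ENNReal.ofReal_toReal (measure_ne_top _ _), ← hsum]
    exact (lintegral_poisson_le μ E hδ).trans (add_le_add_right (ENNReal.tsum_le_tsum hterm) _)
  rw [integral_eq_lintegral_of_nonneg_ae (.of_forall fun x => by positivity)
    (by fun_prop : Measurable fun x : ℝ => ε ^ 2 / ((x - E) ^ 2 + ε ^ 2)).aestronglyMeasurable]
  convert ENNReal.toReal_le_of_le_ofReal (by positivity) hlin using 2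
  ring

lemma tendsto_const_add_div_log (a b : ℝ) :
    Tendsto (fun r => a + b / Real.log r) (𝓝[>] 0) (𝓝 a) := by
  simpa using tendsto_const_nhds.add (Real.tendsto_log_nhdsGT_zero.const_div_atBot b)

noncomputable def localDimQuotient (μ : Measure ℝ) (E r : ℝ) : ℝ :=
  Real.log (μ (Ioo (E - r) (E + r))).toReal / Real.log r

section LocalDimension

variable {μ : Measure ℝ} {E : ℝ}

lemma isBoundedUnder_ge_localDimQuotient [IsFiniteMeasure μ] :
    IsBoundedUnder (· ≥ ·) (𝓝[>] 0) (localDimQuotient μ E) := by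
  have hsmall := (Real.tendsto_log_nhdsGT_zero.const_div_atBot (μ univ).toReal).eventually
    (eventually_gt_nhds (neg_one_lt_zero : (-1 : ℝ) < 0))
  refine isBoundedUnder_of_eventually_ge (a := -1) ?_
  filter_upwards [hsmall, Ioo_mem_nhdsGT zero_lt_one] with r hr ⟨hr0, hr1⟩
  -- `log t ≤ t` holds also at the junk value `log 0 = 0`
  have hlog : Real.log (μ (Ioo (E - r) (E + r))).toReal ≤ (μ univ).toReal :=
    (Real.log_le_self ENNReal.toReal_nonneg).trans
      (ENNReal.toReal_mono (measure_ne_top _ _) (measure_mono (subset_univ _)))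
  exact hr.le.trans (div_le_div_of_nonpos_of_le (Real.log_neg hr0 hr1).le hlog)

variable {c p : ℝ}

lemma localDimQuotient_le_of_rpow_le_measure (hc : 0 < c)
    (h : ∀ᶠ r in 𝓝[>] 0, c * r ^ p ≤ (μ (Ioo (E - r) (E + r))).toReal) :
    ∀ᶠ r in 𝓝[>] 0, localDimQuotient μ E r ≤ p + Real.log c / Real.log r := by
  filter_upwards [h, Ioo_mem_nhdsGT zero_lt_one] with r hr ⟨hr0, hr1⟩
  have hlog_r : Real.log r < 0 := Real.log_neg hr0 hr1
  have hlog : Real.log c + p * Real.log r ≤ Real.log (μ (Ioo (E - r) (E + r))).toReal := by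
    rw [← Real.log_rpow hr0, ← Real.log_mul hc.ne' (by positivity)]
    exact Real.log_le_log (by positivity) hr
  calc localDimQuotient μ E r ≤ (Real.log c + p * Real.log r) / Real.log r :=
        div_le_div_of_nonpos_of_le hlog_r.le hlog
    _ = p + Real.log c / Real.log r := by
        rw [add_div, mul_div_cancel_right₀ _ hlog_r.ne, add_comm]

lemma gammaPlus_le_of_rpow_le_measure [IsFiniteMeasure μ] (hc : 0 < c)
    (h : ∀ᶠ r in 𝓝[>] 0, c * r ^ p ≤ (μ (Ioo (E - r) (E + r))).toReal) :
    gammaPlus μ E ≤ p :=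
  have hlim := tendsto_const_add_div_log p (Real.log c)
  (limsup_le_limsup (localDimQuotient_le_of_rpow_le_measure hc h)
    isBoundedUnder_ge_localDimQuotient.isCoboundedUnder_le hlim.isBoundedUnder_le).trans_eq
    hlim.limsup_eq

lemma gammaMinus_le_gammaPlus_of_rpow_le_measure [IsFiniteMeasure μ] (hc : 0 < c)
    (h : ∀ᶠ r in 𝓝[>] 0, c * r ^ p ≤ (μ (Ioo (E - r) (E + r))).toReal) :
    gammaMinus μ E ≤ gammaPlus μ E :=
  liminf_le_limsup
    ((tendsto_const_add_div_log p (Real.log c)).isBoundedUnder_le.mono_le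
      (localDimQuotient_le_of_rpow_le_measure hc h))
    isBoundedUnder_ge_localDimQuotient

end LocalDimension

section PowerBound

variable {μ : Measure ℝ} [IsFiniteMeasure μ] {E γ : ℝ}

lemma eventually_measure_le_rpow_of_lt_gammaMinus (hγ : γ < gammaMinus μ E) :
    ∀ᶠ r in 𝓝[>] 0, (μ (Ioo (E - r) (E + r))).toReal ≤ r ^ γ := by
  filter_upwards [eventually_lt_of_lt_liminf hγ isBoundedUnder_ge_localDimQuotient,
    Ioo_mem_nhdsGT zero_lt_one] with r hr ⟨hr0, hr1⟩
  exact (Real.lt_rpow_of_log_lt hr0 ((lt_div_iff_of_neg (Real.log_neg hr0 hr1)).1 hr)).le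

lemma exists_measure_le_rpow_of_eventually (hγ : 0 ≤ γ)
    (h : ∀ᶠ r in 𝓝[>] 0, (μ (Ioo (E - r) (E + r))).toReal ≤ r ^ γ) :
    ∃ K, ∀ r, 0 < r → (μ (Ioo (E - r) (E + r))).toReal ≤ K * r ^ γ := by
  obtain ⟨b, hb, hsub⟩ := mem_nhdsGT_iff_exists_Ioo_subset.1 h
  have hb0 : (0 : ℝ) < b := hb
  set M := (μ univ).toReal
  refine ⟨max 1 (M / b ^ γ), fun r hr => ?_⟩
  rcases lt_or_ge r b with hrb | hrb
  · exact (hsub ⟨hr, hrb⟩).trans (le_mul_of_one_le_left (by positivity) (le_max_left _ _))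
  · calc (μ (Ioo (E - r) (E + r))).toReal ≤ M :=
          ENNReal.toReal_mono (measure_ne_top _ _) (measure_mono (subset_univ _))
      _ = M / b ^ γ * b ^ γ := (div_mul_cancel₀ _ (by positivity)).symm
      _ ≤ max 1 (M / b ^ γ) * r ^ γ := by
          gcongr
          exact le_max_right _ _

lemma exists_measure_le_rpow_of_lt_gammaMinus (hγ0 : 0 ≤ γ) (hγ : γ < gammaMinus μ E) :
    ∃ K, ∀ r, 0 < r → (μ (Ioo (E - r) (E + r))).toReal ≤ K * r ^ γ :=
  exists_measure_le_rpow_of_eventually hγ0 (eventually_measure_le_rpow_of_lt_gammaMinus hγ)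

end PowerBound

lemma tendsto_rpow_nhdsGT_zero {a : ℝ} (ha : 0 < a) :
    Tendsto (fun r : ℝ => r ^ a) (𝓝[>] 0) (𝓝[>] 0) := by
  refine tendsto_nhdsWithin_iff.2 ⟨?_, eventually_mem_nhdsWithin.mono fun r hr =>
    Real.rpow_pos_of_pos hr a⟩
  simpa [Real.zero_rpow ha.ne'] using
    (Real.continuousAt_rpow_const 0 a (Or.inr ha.le)).tendsto.mono_left nhdsWithin_le_nhds

lemma exists_rpow_le_mul_borelTransform_im {μ : Measure ℝ} {E η : ℝ}
    (h : 0 < liminf (fun ε : ℝ => ε ^ (1 - η) * (borelTransform μ (E + ε * I)).im) (𝓝[>] 0)) :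
    ∃ c : ℝ, 0 < c ∧ ∀ᶠ ε : ℝ in 𝓝[>] 0, c * ε ^ η ≤ ε * (borelTransform μ (E + ε * I)).im := by
  have hbdd : IsBoundedUnder (· ≥ ·) (𝓝[>] 0)
      (fun ε : ℝ => ε ^ (1 - η) * (borelTransform μ (E + ε * I)).im) := by
    -- otherwise the liminf would be the junk value `0`
    by_contra hnot
    simp [Real.liminf_of_not_isBoundedUnder hnot] at h
  refine ⟨_, half_pos h, ?_⟩
  filter_upwards [eventually_lt_of_lt_liminf (half_lt_self h) hbdd, self_mem_nhdsWithin]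
    with ε hε (hε0 : 0 < ε)
  calc _ ≤ ε ^ η * (ε ^ (1 - η) * (borelTransform μ (E + ε * I)).im) := by
        rw [mul_comm]; gcongr
    _ = ε * (borelTransform μ (E + ε * I)).im := by
        rw [← mul_assoc, ← Real.rpow_add hε0, add_sub_cancel, Real.rpow_one]

section BorelTransform

variable {μ : Measure ℝ} [IsFiniteMeasure μ] {E η c K γ : ℝ}

-- At scale `δ = ε ^ s` the tail `ε² δ^(γ - 2)` of the Poisson bound is `ε ^ e * ε ^ η`, which is
-- `o(ε ^ η)` exactly when `e = 2 + s (γ - 2) - η` is positive.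
lemma eventually_rpow_le_measure (hc : 0 < c) (hγ : γ < 2)
    (hK : ∀ r, 0 < r → (μ (Ioo (E - r) (E + r))).toReal ≤ K * r ^ γ)
    (hlow : ∀ᶠ ε : ℝ in 𝓝[>] 0, c * ε ^ η ≤ ε * (borelTransform μ (E + ε * I)).im)
    {s : ℝ} (hs : 0 < s) (hηs : η < 2 + s * (γ - 2)) :
    ∀ᶠ r in 𝓝[>] 0, c / 2 * r ^ (η / s) ≤ (μ (Ioo (E - r) (E + r))).toReal := by
  set C := K * 2 ^ γ / (1 - 2 ^ (γ - 2))
  set e := 2 + s * (γ - 2) - η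
  have he : 0 < e := by simp only [e]; linarith
  have htail : ∀ᶠ ε in 𝓝[>] 0, C * ε ^ e ≤ c / 2 :=
    (((tendsto_rpow_nhdsGT_zero he).mono_right nhdsWithin_le_nhds).const_mul C).eventually
      (eventually_le_nhds (by simpa using half_pos hc))
  have hscale : ∀ᶠ ε in 𝓝[>] 0, c / 2 * ε ^ η ≤ (μ (Ioo (E - ε ^ s) (E + ε ^ s))).toReal := by
    filter_upwards [hlow, htail, self_mem_nhdsWithin] with ε hε htε (hε0 : 0 < ε)
    have hexp : ε ^ 2 * (ε ^ s) ^ (γ - 2) = ε ^ e * ε ^ η := by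
      rw [← Real.rpow_mul hε0.le, ← Real.rpow_two ε, ← Real.rpow_add hε0, ← Real.rpow_add hε0]
      congr 1
      ring
    have hpoisson := integral_poisson_le_of_measure_le_rpow μ E (ε := ε) hγ hK
      (Real.rpow_pos_of_pos hε0 s)
    rw [← mul_borelTransform_im μ E hε0, hexp] at hpoisson
    have := mul_le_mul_of_nonneg_right htε (Real.rpow_pos_of_pos hε0 η).le
    linarith
  filter_upwards [(tendsto_rpow_nhdsGT_zero (one_div_pos.2 hs)).eventually hscale,
    self_mem_nhdsWithin] with r hr (hr0 : 0 < r)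
  rwa [← Real.rpow_mul hr0.le, ← Real.rpow_mul hr0.le, one_div_mul_cancel hs.ne', Real.rpow_one,
    one_div_mul_eq_div] at hr

lemma gammaPlus_le_of_measure_le_rpow (hc : 0 < c) (hη : η < 2) (hγ : γ < 2)
    (hK : ∀ r, 0 < r → (μ (Ioo (E - r) (E + r))).toReal ≤ K * r ^ γ)
    (hlow : ∀ᶠ ε : ℝ in 𝓝[>] 0, c * ε ^ η ≤ ε * (borelTransform μ (E + ε * I)).im) :
    gammaPlus μ E ≤ η * (2 - γ) / (2 - η) := by
  set s₀ := (2 - η) / (2 - γ)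
  have hs₀ : 0 < s₀ := div_pos (by linarith) (by linarith)
  have hlim : Tendsto (fun s => η / s) (𝓝[<] s₀) (𝓝 (η * (2 - γ) / (2 - η))) := by
    have : η * (2 - γ) / (2 - η) = η / s₀ := by
      simp only [s₀]; field_simp
    rw [this]
    exact (continuousAt_const.div continuousAt_id hs₀.ne').tendsto.mono_left nhdsWithin_le_nhds
  refine ge_of_tendsto hlim ?_
  filter_upwards [Ioo_mem_nhdsLT hs₀] with s ⟨hs, hss₀⟩
  have : s * (2 - γ) < 2 - η := (lt_div_iff₀ (by linarith)).1 hss₀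
  exact gammaPlus_le_of_rpow_le_measure (half_pos hc)
    (eventually_rpow_le_measure hc hγ hK hlow hs (by linarith))

end BorelTransform

/-- If `liminf_{ε→0⁺} ε^{1−η} Im m(E+iε) > 0` then
`γ_μ⁺(E) ≤ η (2 − γ_μ⁻(E)) / (2 − η)`. -/
theorem stmt_1 (μ : Measure ℝ) [IsFiniteMeasure μ] (η E : ℝ) (hη0 : 0 ≤ η) (hη1 : η < 1)
    (h : 0 < Filter.liminf
      (fun ε : ℝ => ε ^ (1 - η) * (borelTransform μ (E + ε * Complex.I)).im)
      (nhdsWithin 0 (Set.Ioi 0))) :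
    gammaPlus μ E ≤ η * (2 - gammaMinus μ E) / (2 - η) := by
  obtain ⟨c, hc, hlow⟩ := exists_rpow_le_mul_borelTransform_im h
  have hη2 : η < 2 := by linarith
  have hK₀ (r : ℝ) (_ : 0 < r) :
      (μ (Ioo (E - r) (E + r))).toReal ≤ (μ univ).toReal * r ^ (0 : ℝ) := by
    simpa using ENNReal.toReal_mono (measure_ne_top μ _) (measure_mono (subset_univ _))
  -- the trivial bound (`γ = 0`, `s = 1 / 2`) already gives `γ⁻ ≤ γ⁺ ≤ 2η < 2`
  have hΓ : gammaMinus μ E < 2 := by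
    have hbase := eventually_rpow_le_measure hc two_pos hK₀ hlow one_half_pos (by linarith)
    calc gammaMinus μ E ≤ gammaPlus μ E :=
          gammaMinus_le_gammaPlus_of_rpow_le_measure (half_pos hc) hbase
      _ ≤ η / (1 / 2) := gammaPlus_le_of_rpow_le_measure (half_pos hc) hbase
      _ < 2 := by linarith
  rcases le_or_gt (gammaMinus μ E) 0 with hΓ0 | hΓ0
  · calc gammaPlus μ E ≤ η * (2 - 0) / (2 - η) :=
          gammaPlus_le_of_measure_le_rpow hc hη2 two_pos hK₀ hlow
      _ ≤ η * (2 - gammaMinus μ E) / (2 - η) := by gcongr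
  · have hlim : Tendsto (fun γ => η * (2 - γ) / (2 - η)) (𝓝[<] gammaMinus μ E)
        (𝓝 (η * (2 - gammaMinus μ E) / (2 - η))) :=
      (Continuous.tendsto (by fun_prop) _).mono_left nhdsWithin_le_nhds
    refine ge_of_tendsto hlim ?_
    filter_upwards [Ioo_mem_nhdsLT hΓ0] with γ ⟨hγ0, hγ⟩
    obtain ⟨K, hK⟩ := exists_measure_le_rpow_of_lt_gammaMinus hγ0.le hγ
    exact gammaPlus_le_of_measure_le_rpow hc hη2 (hγ.trans hΓ) hK hlow
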